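/- Let d₀ ≥ 4 and define recursively d_i = √8·exp(d_{i−1}²/16) for i ≥ 1. Then Σ_{i=0}^∞ 12.8/d_i ≤ 5. -/
import Mathlib


/-- **Total energy bound for the high-SNR scheme (Lemma 2, eq. (35)).**
If `d₀ ≥ 4` and `d_{i+1} = √8·exp(d_i²/16)`, then `∑_{i=0}^∞ 12.8/d_i ≤ 5`
(and the series converges). -/
theorem total_energy_le_five (d : ℕ → ℝ) (h0 : 4 ≤ d 0)
    (hrec : ∀ i : ℕ, d (i + 1) = Real.sqrt 8 * Real.exp ((d i) ^ 2 / 16)) :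
    Summable (fun i : ℕ => 12.8 / d i) ∧ ∑' i : ℕ, 12.8 / d i ≤ 5 := by
  have hs8 : (2.828:ℝ) ≤ Real.sqrt 8 := by
    nlinarith [Real.sq_sqrt (by norm_num : (0:ℝ) ≤ 8), Real.sqrt_nonneg 8]
  have he : (2.7182818:ℝ) ≤ Real.exp 1 := by
    have := Real.exp_one_gt_d9; linarith
  have hpos : ∀ i, 0 < d i := by
    intro i
    cases i with
    | zero => linarith
    | succ n =>
      rw [hrec n]
      exact mul_pos (Real.sqrt_pos.2 (by norm_num)) (Real.exp_pos _)
  -- lower bound for d 1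
  have hd1 : (7.6873:ℝ) ≤ d 1 := by
    rw [hrec 0]
    have h1 : (1:ℝ) ≤ d 0 ^ 2 / 16 := by nlinarith
    have h2 : Real.exp 1 ≤ Real.exp (d 0 ^ 2 / 16) := Real.exp_le_exp.2 h1
    calc (7.6873:ℝ) ≤ 2.828 * 2.7182818 := by norm_num
      _ ≤ Real.sqrt 8 * Real.exp (d 0 ^ 2 / 16) :=
        mul_le_mul hs8 (he.trans h2) (by norm_num) (Real.sqrt_nonneg 8)
  -- lower bound for d 2
  have hd2 : (96:ℝ) ≤ d 2 := by
    rw [hrec 1]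
    have h1 : (3.6934:ℝ) ≤ d 1 ^ 2 / 16 := by nlinarith
    have h2 : Real.exp 3.6934 ≤ Real.exp (d 1 ^ 2 / 16) := Real.exp_le_exp.2 h1
    have h3 : Real.exp (3.6934:ℝ) = Real.exp 1 ^ 3 * Real.exp 0.6934 := by
      rw [← Real.exp_nat_mul, ← Real.exp_add]; norm_num
    have h4 : (1.6934:ℝ) ≤ Real.exp 0.6934 := by
      have := Real.add_one_le_exp (0.6934:ℝ); linarith
    have h5 : (20.0855:ℝ) ≤ Real.exp 1 ^ 3 := by
      have := pow_le_pow_left₀ (by norm_num : (0:ℝ) ≤ 2.7182818) he 3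
      nlinarith
    have h6 : (34.01:ℝ) ≤ Real.exp (3.6934:ℝ) := by
      rw [h3]; nlinarith [Real.exp_pos (0.6934:ℝ)]
    calc (96:ℝ) ≤ 2.828 * 34.01 := by norm_num
      _ ≤ Real.sqrt 8 * Real.exp (d 1 ^ 2 / 16) :=
        mul_le_mul hs8 (h6.trans h2) (by norm_num) (Real.sqrt_nonneg 8)
  -- lower bound for d 3
  have hd3 : (100000:ℝ) ≤ d 3 := by
    rw [hrec 2]
    have h1 : (576:ℝ) ≤ d 2 ^ 2 / 16 := by nlinarith
    have h2 : Real.exp 576 ≤ Real.exp (d 2 ^ 2 / 16) := Real.exp_le_exp.2 h1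
    have h3 : (83521:ℝ) ≤ Real.exp 576 := by
      have h4 : (289:ℝ) ≤ Real.exp 288 := by
        have := Real.add_one_le_exp (288:ℝ); linarith
      have h5 : Real.exp (576:ℝ) = Real.exp 288 * Real.exp 288 := by
        rw [← Real.exp_add]; norm_num
      rw [h5]; nlinarith
    calc (100000:ℝ) ≤ 2.828 * 83521 := by norm_num
      _ ≤ Real.sqrt 8 * Real.exp (d 2 ^ 2 / 16) :=
        mul_le_mul hs8 (h3.trans h2) (by norm_num) (Real.sqrt_nonneg 8)
  -- doubling map
  have hdouble : ∀ x : ℝ, 96 ≤ x → 2 * x ≤ Real.sqrt 8 * Real.exp (x ^ 2 / 16) := by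
    intro x hx
    have h1 : x ^ 2 / 16 + 1 ≤ Real.exp (x ^ 2 / 16) := by
      have := Real.add_one_le_exp (x ^ 2 / 16); linarith
    have h2 : 2.828 * (x ^ 2 / 16 + 1) ≤ Real.sqrt 8 * Real.exp (x ^ 2 / 16) :=
      mul_le_mul hs8 h1 (by positivity) (Real.sqrt_nonneg 8)
    nlinarith [mul_nonneg (sub_nonneg.2 hx) (by linarith : (0:ℝ) ≤ x)]
  -- geometric growth from index 3
  have hgeom : ∀ k : ℕ, (100000:ℝ) * 2 ^ k ≤ d (k + 3) := by
    intro k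
    induction k with
    | zero => simpa using hd3
    | succ n ih =>
      have h1 : (1:ℝ) ≤ 2 ^ n := one_le_pow₀ (by norm_num : (1:ℝ) ≤ 2)
      have h2 : (96:ℝ) ≤ d (n + 3) := by nlinarith
      have h3 := hdouble (d (n + 3)) h2
      have h4 : n + 1 + 3 = (n + 3) + 1 := by ring
      rw [h4, hrec (n + 3)]
      calc (100000:ℝ) * 2 ^ (n + 1) = 2 * (100000 * 2 ^ n) := by ring
        _ ≤ 2 * d (n + 3) := by linarith
        _ ≤ _ := h3
  -- tail comparison
  have hf3 : ∀ i : ℕ, 12.8 / d (i + 3) ≤ 12.8 / 100000 * (1 / 2) ^ i := by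
    intro i
    have h1 : (0:ℝ) < 100000 * 2 ^ i := by positivity
    have h2 : 12.8 / d (i + 3) ≤ 12.8 / (100000 * 2 ^ i) := by
      gcongr
      exact hgeom i
    have h3 : (12.8:ℝ) / 100000 * (1 / 2) ^ i = 12.8 / (100000 * 2 ^ i) := by
      rw [div_pow, one_pow, div_mul_div_comm]; ring
    linarith
  have hnn : ∀ i : ℕ, (0:ℝ) ≤ 12.8 / d (i + 3) := fun i =>
    div_nonneg (by norm_num) (hpos (i + 3)).le
  have hg : Summable (fun i : ℕ => (12.8:ℝ) / 100000 * (1 / 2) ^ i) :=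
    summable_geometric_two.mul_left _
  have hS3 : Summable (fun i : ℕ => 12.8 / d (i + 3)) :=
    Summable.of_nonneg_of_le hnn hf3 hg
  have hS : Summable (fun i : ℕ => 12.8 / d i) := (summable_nat_add_iff 3).mp hS3
  refine ⟨hS, ?_⟩
  have hsplit := Summable.sum_add_tsum_nat_add 3 hS
  have htail : ∑' i : ℕ, 12.8 / d (i + 3) ≤ 12.8 / 100000 * 2 := by
    calc ∑' i : ℕ, 12.8 / d (i + 3) ≤ ∑' i : ℕ, (12.8:ℝ) / 100000 * (1 / 2) ^ i :=
          Summable.tsum_le_tsum hf3 hS3 hg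
      _ = 12.8 / 100000 * ∑' i : ℕ, (1 / 2 : ℝ) ^ i := tsum_mul_left
      _ = 12.8 / 100000 * 2 := by rw [tsum_geometric_two]
  have hhead : ∑ i ∈ Finset.range 3, 12.8 / d i = 12.8 / d 0 + 12.8 / d 1 + 12.8 / d 2 := by
    simp [Finset.sum_range_succ]
  have ht0 : 12.8 / d 0 ≤ 3.2 := by
    rw [div_le_iff₀ (hpos 0)]; linarith
  have ht1 : 12.8 / d 1 ≤ 1.6651 := by
    rw [div_le_iff₀ (hpos 1)]; nlinarith
  have ht2 : 12.8 / d 2 ≤ 0.1334 := by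
    rw [div_le_iff₀ (hpos 2)]; nlinarith
  have : ∑' i : ℕ, 12.8 / d i =
      (12.8 / d 0 + 12.8 / d 1 + 12.8 / d 2) + ∑' i : ℕ, 12.8 / d (i + 3) := by
    rw [← hhead, hsplit]
  rw [this]
  linarith
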